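/- For gross substitute valuations, the set of Walrasian price vectors forms a lattice: if p and p' are Walrasian prices then so are the componentwise maximum p ∨ p' and the componentwise minimum p ∧ p' (Gul–Stacchetti). -/

import Mathlib

/-!
Let `u x = max_T (w T - ∑_{j ∈ T} x j)` be a buyer's indirect utility. Raising the price of item
`i` by `t` turns `u` into `max (A - t) B`, where `A` and `B` are the best surpluses over bundles
with and without `i`; gross substitutability says exactly that `A - B` cannot decrease when the
other prices rise. Hence `u` has decreasing differences, and raising one coordinate at a time
makes it submodular: `u (p ⊔ p') + u (p ⊓ p') ≤ u p + u p'`.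

If `S` clears the market at `p` and `S'` at `p'`, then, since `p ⊔ p'` and `p ⊓ p'` have the
same total as `p` and `p'`, the buyers' surpluses from `S` at `p ⊔ p'` and from `S'` at
`p ⊓ p'` add up to `∑ (u p + u p') ≥ ∑ (u (p ⊔ p') + u (p ⊓ p'))`. Each of these surpluses is
at most the corresponding indirect utility, so all are equal: `S` still clears the market at
`p ⊔ p'`, and `S'` at `p ⊓ p'`.
-/
open Finset Function

section DecreasingDifferences

variable {ι : Type*} [DecidableEq ι]

def HasDecreasingDifferences (u : (ι → ℝ) → ℝ) : Prop :=
  ∀ ⦃c c' : ι → ℝ⦄, c ≤ c' → ∀ ⦃i : ι⦄, c i = c' i → ∀ ⦃δ : ℝ⦄, 0 ≤ δ →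
    u (c' + Pi.single i δ) + u c ≤ u (c + Pi.single i δ) + u c'

namespace HasDecreasingDifferences

variable {u : (ι → ℝ) → ℝ}

theorem add_le_add_of_support_subset (hu : HasDecreasingDifferences u) (K : Finset ι) :
    ∀ ⦃c c' d : ι → ℝ⦄, c ≤ c' → 0 ≤ d → (∀ j ∉ K, d j = 0) → (∀ j ∈ K, c j = c' j) →
      u (c' + d) + u c ≤ u (c + d) + u c' := by
  induction K using Finset.induction_on with
  | empty =>
    intro c c' d _ _ hd _
    obtain rfl : d = 0 := funext fun j => hd j (notMem_empty j)
    simp only [add_zero, add_comm, le_refl]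
  | insert i K hiK ih =>
    intro c c' d hcc' hd hdK hK
    set d₀ := update d i 0
    have hsplit : d = d₀ + Pi.single i (d i) := by
      ext j
      by_cases hj : j = i
      · subst hj; simp [d₀]
      · simp [d₀, hj]
    have hstep := hu (c := c + d₀) (c' := c' + d₀) (i := i) (by gcongr)
      (by simp [d₀, hK i (mem_insert_self i K)]) (hd i)
    have hd₀ : 0 ≤ d₀ := fun j => by
      by_cases hji : j = i
      · simp [d₀, hji]
      · simpa [d₀, hji] using hd j
    have hd₀K : ∀ j ∉ K, d₀ j = 0 := fun j hj => by
      by_cases hji : j = i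
      · simp [d₀, hji]
      · simpa [d₀, hji] using hdK j (by simp [hji, hj])
    have hrest := ih (d := d₀) hcc' hd₀ hd₀K fun j hj => hK j (mem_insert_of_mem hj)
    rw [hsplit, ← add_assoc, ← add_assoc]
    linarith

theorem sup_add_inf_le [Fintype ι] (hu : HasDecreasingDifferences u) (p p' : ι → ℝ) :
    u (p ⊔ p') + u (p ⊓ p') ≤ u p + u p' := by
  have h := hu.add_le_add_of_support_subset ({j | p j < p' j} : Finset ι)
    (c := p ⊓ p') (c' := p) (d := fun j => max (p' j - p j) 0) inf_le_left
    (fun j => le_max_right _ _)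
    (fun j hj => max_eq_right (by simp only [mem_filter, mem_univ, true_and] at hj; linarith))
    (fun j hj => min_eq_left (by simp only [mem_filter, mem_univ, true_and] at hj; linarith))
  have hsup : p + (fun j => max (p' j - p j) 0) = p ⊔ p' := by
    ext j; simp only [Pi.add_apply, Pi.sup_apply, max_def]; split_ifs <;> linarith
  have hinf : p ⊓ p' + (fun j => max (p' j - p j) 0) = p' := by
    ext j; simp only [Pi.add_apply, Pi.inf_apply, min_def, max_def]; split_ifs <;> linarith
  rw [hsup, hinf] at h
  linarith

end HasDecreasingDifferences

end DecreasingDifferences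

section IndirectUtility

variable {ι : Type*} (w : Finset ι → ℝ)

def surplus (x : ι → ℝ) (T : Finset ι) : ℝ := w T - ∑ j ∈ T, x j

def IsDemanded (x : ι → ℝ) (S : Finset ι) : Prop := ∀ T, surplus w x T ≤ surplus w x S

def GrossSubstitutes : Prop :=
  ∀ ⦃x x' : ι → ℝ⦄, x ≤ x' → ∀ ⦃S : Finset ι⦄, IsDemanded w x S →
    ∃ S', IsDemanded w x' S' ∧ ∀ j ∈ S, x j = x' j → j ∈ S'

theorem surplus_add_single [DecidableEq ι] (x : ι → ℝ) (i : ι) (t : ℝ) (T : Finset ι) :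
    surplus w (x + Pi.single i t) T = surplus w x T - if i ∈ T then t else 0 := by
  simp only [surplus, Pi.add_apply, sum_add_distrib, sum_pi_single']
  ring

variable [Fintype ι]

noncomputable def indirectUtility (x : ι → ℝ) : ℝ := univ.sup' univ_nonempty (surplus w x)

theorem surplus_le_indirectUtility (x : ι → ℝ) (T : Finset ι) :
    surplus w x T ≤ indirectUtility w x :=
  le_sup' _ (mem_univ T)

theorem isDemanded_iff_indirectUtility_le {x : ι → ℝ} {S : Finset ι} :
    IsDemanded w x S ↔ indirectUtility w x ≤ surplus w x S := by
  simp [indirectUtility, IsDemanded]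

theorem IsDemanded.indirectUtility_eq {x : ι → ℝ} {S : Finset ι} (h : IsDemanded w x S) :
    indirectUtility w x = surplus w x S :=
  ((isDemanded_iff_indirectUtility_le w).mp h).antisymm (surplus_le_indirectUtility w x S)

variable [DecidableEq ι]

noncomputable def indirectUtilityWith (i : ι) (x : ι → ℝ) : ℝ :=
  ({T | i ∈ T} : Finset (Finset ι)).sup' ⟨{i}, by simp⟩ (surplus w x)

noncomputable def indirectUtilityWithout (i : ι) (x : ι → ℝ) : ℝ :=
  ({T | i ∉ T} : Finset (Finset ι)).sup' ⟨∅, by simp⟩ (surplus w x)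

theorem surplus_le_indirectUtilityWith (x : ι → ℝ) {i : ι} {T : Finset ι} (hi : i ∈ T) :
    surplus w x T ≤ indirectUtilityWith w i x :=
  le_sup' (surplus w x) (by simpa using hi)

theorem surplus_le_indirectUtilityWithout (x : ι → ℝ) {i : ι} {T : Finset ι} (hi : i ∉ T) :
    surplus w x T ≤ indirectUtilityWithout w i x :=
  le_sup' (surplus w x) (by simpa using hi)

theorem indirectUtility_add_single (x : ι → ℝ) (i : ι) (t : ℝ) :
    indirectUtility w (x + Pi.single i t) =
      max (indirectUtilityWith w i x - t) (indirectUtilityWithout w i x) := by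
  apply le_antisymm
  · refine sup'_le _ _ fun T _ => ?_
    rw [surplus_add_single]
    by_cases hi : i ∈ T
    · have := surplus_le_indirectUtilityWith w x hi
      simp only [hi, if_true, le_max_iff]
      left; linarith
    · have := surplus_le_indirectUtilityWithout w x hi
      simp only [hi, if_false, sub_zero, le_max_iff]
      right; linarith
  · refine max_le (sub_le_iff_le_add.mpr (sup'_le _ _ fun T hT => ?_)) (sup'_le _ _ fun T hT => ?_)
    all_goals
      have h := surplus_le_indirectUtility w (x + Pi.single i t) T
      simp only [mem_filter, mem_univ, true_and] at hT
      simp only [surplus_add_single, hT, if_true, if_false] at h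
      linarith

theorem indirectUtility_eq_max (x : ι → ℝ) (i : ι) :
    indirectUtility w x = max (indirectUtilityWith w i x) (indirectUtilityWithout w i x) := by
  simpa using indirectUtility_add_single w x i 0

namespace GrossSubstitutes

variable {w}

theorem indirectUtilityWith_sub_indirectUtilityWithout_le (hw : GrossSubstitutes w)
    {c c' : ι → ℝ} (hcc' : c ≤ c') {i : ι} (hi : c i = c' i) :
    indirectUtilityWith w i c - indirectUtilityWithout w i c ≤
      indirectUtilityWith w i c' - indirectUtilityWithout w i c' := by
  obtain ⟨T, hT, hTeq⟩ :=
    exists_mem_eq_sup' (s := ({T | i ∈ T} : Finset (Finset ι))) ⟨{i}, by simp⟩ (surplus w c)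
  replace hT : i ∈ T := by simpa using hT
  change indirectUtilityWith w i c = surplus w c T at hTeq
  set t := indirectUtilityWith w i c - indirectUtilityWithout w i c
  -- at this surcharge on `i`, the best bundle `T` containing `i` ties with those avoiding `i`
  have hdemand : IsDemanded w (c + Pi.single i t) T := by
    rw [isDemanded_iff_indirectUtility_le, indirectUtility_add_single, surplus_add_single,
      if_pos hT]
    refine max_le ?_ ?_ <;> linarith
  obtain ⟨S', hS', hkeep⟩ := hw (add_le_add_left hcc' _) hdemand
  have hiS' : i ∈ S' := hkeep i hT (by simp [hi])
  have hu := hS'.indirectUtility_eq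
  rw [indirectUtility_add_single, surplus_add_single, if_pos hiS'] at hu
  have := surplus_le_indirectUtilityWith w c' hiS'
  have := le_max_right (indirectUtilityWith w i c' - t) (indirectUtilityWithout w i c')
  linarith

theorem hasDecreasingDifferences (hw : GrossSubstitutes w) :
    HasDecreasingDifferences (indirectUtility w) := by
  intro c c' hcc' i hi δ _
  have h := hw.indirectUtilityWith_sub_indirectUtilityWithout_le hcc' hi
  rw [indirectUtility_add_single, indirectUtility_add_single, indirectUtility_eq_max w c i,
    indirectUtility_eq_max w c' i]
  -- `max a b - max (a - δ) b` is a monotone function of `a - b`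
  simp only [max_def]
  split_ifs <;> linarith

end GrossSubstitutes

end IndirectUtility

section Market

variable {κ ι : Type*} [Fintype κ] [Fintype ι]

theorem sum_sum_eq_sum_of_pairwise_disjoint {M : Type*} [AddCommMonoid M] {S : κ → Finset ι}
    (hdisj : Pairwise (Disjoint on S)) (hcover : ∀ j, ∃ i, j ∈ S i) (x : ι → M) :
    ∑ i, ∑ j ∈ S i, x j = ∑ j, x j := by
  classical
  rw [← sum_biUnion fun i _ i' _ h => hdisj h]
  congr
  exact eq_univ_of_forall fun j => mem_biUnion.mpr (by simpa using hcover j)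

theorem sum_surplus_eq {w : κ → Finset ι → ℝ} {S : κ → Finset ι}
    (hdisj : Pairwise (Disjoint on S)) (hcover : ∀ j, ∃ i, j ∈ S i) (x : ι → ℝ) :
    ∑ i, surplus (w i) x (S i) = ∑ i, w i (S i) - ∑ j, x j := by
  simp only [surplus, sum_sub_distrib, sum_sum_eq_sum_of_pairwise_disjoint hdisj hcover]

theorem isDemanded_sup_and_inf {w : κ → Finset ι → ℝ} (hw : ∀ i, GrossSubstitutes (w i))
    {p p' : ι → ℝ} {S S' : κ → Finset ι}
    (hdisj : Pairwise (Disjoint on S)) (hcover : ∀ j, ∃ i, j ∈ S i)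
    (hS : ∀ i, IsDemanded (w i) p (S i))
    (hdisj' : Pairwise (Disjoint on S')) (hcover' : ∀ j, ∃ i, j ∈ S' i)
    (hS' : ∀ i, IsDemanded (w i) p' (S' i)) (i : κ) :
    IsDemanded (w i) (p ⊔ p') (S i) ∧ IsDemanded (w i) (p ⊓ p') (S' i) := by
  classical
  set u := fun i => indirectUtility (w i)
  have hle : ∀ i, surplus (w i) (p ⊔ p') (S i) + surplus (w i) (p ⊓ p') (S' i) ≤
      u i (p ⊔ p') + u i (p ⊓ p') := fun i =>
    add_le_add (surplus_le_indirectUtility _ _ _) (surplus_le_indirectUtility _ _ _)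
  have hsub : ∀ i, u i (p ⊔ p') + u i (p ⊓ p') ≤ u i p + u i p' := fun i =>
    (hw i).hasDecreasingDifferences.sup_add_inf_le p p'
  have hprices : ∑ j, (p ⊔ p') j + ∑ j, (p ⊓ p') j = ∑ j, p j + ∑ j, p' j := by
    simp only [← sum_add_distrib, Pi.sup_apply, Pi.inf_apply, max_add_min]
  have htotal : ∑ i, (u i p + u i p') =
      ∑ i, (surplus (w i) (p ⊔ p') (S i) + surplus (w i) (p ⊓ p') (S' i)) := by
    simp only [u, sum_add_distrib, fun i => (hS i).indirectUtility_eq,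
      fun i => (hS' i).indirectUtility_eq, sum_surplus_eq hdisj hcover,
      sum_surplus_eq hdisj' hcover']
    linarith
  have hsum := (sum_le_sum fun i _ => hsub i).trans htotal.le
  have heq := (sum_eq_sum_iff_of_le fun i _ => hle i).mp
    ((sum_le_sum fun i _ => hle i).antisymm hsum) i (mem_univ i)
  have hq := surplus_le_indirectUtility (w i) (p ⊔ p') (S i)
  have hr := surplus_le_indirectUtility (w i) (p ⊓ p') (S' i)
  simp only [isDemanded_iff_indirectUtility_le]
  constructor <;> linarith

end Market

/-- **Gul–Stacchetti lattice theorem.** If all buyers have gross substitute valuations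
(Kelso–Crawford definition), then the set of Walrasian price vectors forms a lattice:
if `p` and `p'` are Walrasian, so are the componentwise max and componentwise min. -/
theorem walrasian_prices_lattice
    (m n : ℕ) (v : Fin m → Finset (Fin n) → ℤ)
    (hGS : ∀ (i : Fin m) (p p' : Fin n → ℝ), (∀ j, p j ≤ p' j) →
      ∀ S : Finset (Fin n),
        (∀ T, (v i T : ℝ) - ∑ j ∈ T, p j ≤ (v i S : ℝ) - ∑ j ∈ S, p j) →
        ∃ S', (∀ T, (v i T : ℝ) - ∑ j ∈ T, p' j ≤ (v i S' : ℝ) - ∑ j ∈ S', p' j) ∧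
          ∀ j ∈ S, p j = p' j → j ∈ S') :
    let Walrasian : (Fin n → ℝ) → Prop := fun p =>
      ∃ S : Fin m → Finset (Fin n),
        (∀ i1 i2, i1 ≠ i2 → Disjoint (S i1) (S i2)) ∧ (∀ j, ∃ i, j ∈ S i) ∧
        ∀ i T, (v i T : ℝ) - ∑ j ∈ T, p j ≤ (v i (S i) : ℝ) - ∑ j ∈ S i, p j
    ∀ p p' : Fin n → ℝ, Walrasian p → Walrasian p' →
      Walrasian (fun j => max (p j) (p' j)) ∧ Walrasian (fun j => min (p j) (p' j)) := by
  intro Walrasian p p' ⟨S, hdisj, hcover, hS⟩ ⟨S', hdisj', hcover', hS'⟩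
  have h := isDemanded_sup_and_inf (w := fun i T => (v i T : ℝ)) hGS
    (fun _ _ => hdisj _ _) hcover hS (fun _ _ => hdisj' _ _) hcover' hS'
  exact ⟨⟨S, hdisj, hcover, fun i => (h i).1⟩, ⟨S', hdisj', hcover', fun i => (h i).2⟩⟩
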